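/- For every real k, the principal-value identity (2/π) · P∫_{−∞}^{∞} (arctan(k')/k') / (k' − k) dk' = −ln(k² + 1)/k holds (with the right-hand side interpreted as 0 at k = 0). -/

import Mathlib

/-!
Since `arctan x / x = ∫₀¹ dt / (1 + t²x²)`, Fubini turns the truncated integral into
`∫₀¹ J(t, ε) dt`, where `J(t, ε)` is the truncated integral of `1 / ((1 + t²x²)(x - k))`.
Partial fractions make `J` elementary; the `log ε` singularities of its two tails cancel, so `J`
extends continuously to `ε = 0` with `J(t, 0) = -π t k / (1 + t²k²)`, and
`(2/π) ∫₀¹ J(t, 0) dt = -log (1 + k²) / k`.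
-/

open MeasureTheory Real Filter Set Topology

noncomputable def arctanKernel (k t x : ℝ) : ℝ := (1 + (t * x) ^ 2)⁻¹ / (x - k)

-- Mathlib's `log (x - k)` is `log |x - k|`, so this is a primitive on both sides of `k`.
noncomputable def arctanKernelPrimitive (k t x : ℝ) : ℝ :=
  (1 + (t * k) ^ 2)⁻¹ * (log (x - k) - log (1 + (t * x) ^ 2) / 2 - t * k * arctan (t * x))

lemma hasDerivAt_arctanKernelPrimitive {k x : ℝ} (t : ℝ) (hx : x ≠ k) :
    HasDerivAt (arctanKernelPrimitive k t) (arctanKernel k t x) x := by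
  have hxk : x - k ≠ 0 := sub_ne_zero.2 hx
  have hlin : HasDerivAt (fun x => t * x) t x := by simpa using (hasDerivAt_id x).const_mul t
  have hsq : HasDerivAt (fun x => 1 + (t * x) ^ 2) (2 * (t * x) * t) x := by
    simpa using (hlin.pow 2).const_add 1
  have := ((((hasDerivAt_id x).sub_const k).log hxk).sub ((hsq.log (by positivity)).div_const 2)
    |>.sub (hlin.arctan.const_mul (t * k))).const_mul (1 + (t * k) ^ 2)⁻¹
  refine this.congr_deriv ?_
  have : 1 + (t * x) ^ 2 ≠ 0 := by positivity
  have : 1 + (t * k) ^ 2 ≠ 0 := by positivity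
  simp only [arctanKernel, id]
  field_simp
  ring

lemma tendsto_arctanKernelPrimitive_atTop (k : ℝ) {t : ℝ} (ht : 0 < t) :
    Tendsto (arctanKernelPrimitive k t) atTop
      (𝓝 ((1 + (t * k) ^ 2)⁻¹ * (-log t - t * k * (π / 2)))) := by
  have hlog : Tendsto (fun x => log (x - k) - log (1 + (t * x) ^ 2) / 2) atTop (𝓝 (-log t)) := by
    set g : ℝ → ℝ := fun y => log ((1 - k * y) ^ 2 / (y ^ 2 + t ^ 2)) / 2
    have hg : ContinuousAt g 0 := by
      simp only [g]
      fun_prop (disch := simp [ht.ne'])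
    have hg0 : g 0 = -log t := by
      simp [g, log_pow]; ring
    refine (hg0 ▸ hg.tendsto.comp tendsto_inv_atTop_zero).congr' ?_
    filter_upwards [eventually_gt_atTop (max k 0)] with x hx
    have hxk : 0 < x - k := by linarith [le_max_left k 0]
    have hx0 : 0 < x := by linarith [le_max_right k 0]
    have hq : (1 - k * x⁻¹) ^ 2 / (x⁻¹ ^ 2 + t ^ 2) = (x - k) ^ 2 / (1 + (t * x) ^ 2) := by
      field_simp
    simp only [Function.comp, g, hq]
    rw [log_div (by positivity) (by positivity), log_pow]
    push_cast; ring
  have harctan : Tendsto (fun x => arctan (t * x)) atTop (𝓝 (π / 2)) :=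
    (tendsto_arctan_atTop.mono_right nhdsWithin_le_nhds).comp
      (tendsto_id.const_mul_atTop ht)
  exact (hlog.sub (harctan.const_mul (t * k))).const_mul _

lemma integral_Ioi_arctanKernel {k t a : ℝ} (ht : 0 < t) (ha : k < a) :
    ∫ x in Ioi a, arctanKernel k t x
      = (1 + (t * k) ^ 2)⁻¹ * (-log t - t * k * (π / 2)) - arctanKernelPrimitive k t a :=
  integral_Ioi_of_hasDerivAt_of_nonneg'
    (fun x hx => hasDerivAt_arctanKernelPrimitive t (ha.trans_le hx).ne')
    (fun x hx => div_nonneg (by positivity) (sub_nonneg.2 (ha.trans hx).le))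
    (tendsto_arctanKernelPrimitive_atTop k ht)

lemma setIntegral_abs_sub_gt {E : Type*} [NormedAddCommGroup E] [NormedSpace ℝ E] {f : ℝ → E}
    {k ε : ℝ} (hε : 0 ≤ ε) (hf : IntegrableOn f {x | ε < |x - k|}) :
    ∫ x in {x | ε < |x - k|}, f x = (∫ x in Ioi (k + ε), f x) + ∫ x in Ioi (ε - k), f (-x) := by
  have hS : {x | ε < |x - k|} = Iio (k - ε) ∪ Ioi (k + ε) := by
    ext x
    simp only [mem_ofPred_eq, mem_union, mem_Iio, mem_Ioi, lt_abs]
    constructor <;> rintro (h | h) <;> [right; left; right; left] <;> linarith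
  have hdisj : Disjoint (Iio (k - ε)) (Ioi (k + ε)) :=
    (Iic_disjoint_Ioi (by linarith)).mono_left Iio_subset_Iic_self
  rw [hS] at hf ⊢
  rw [setIntegral_union hdisj measurableSet_Ioi (hf.mono_set subset_union_left)
    (hf.mono_set subset_union_right), add_comm, integral_comp_neg_Ioi, neg_sub,
    integral_Iic_eq_integral_Iio]

lemma arctanKernel_neg (k t x : ℝ) : arctanKernel k t (-x) = -arctanKernel (-k) t x := by
  rw [arctanKernel, arctanKernel, mul_neg, neg_sq, sub_neg_eq_add, ← div_neg, neg_add']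

noncomputable def truncIntegralArctanKernel (k t ε : ℝ) : ℝ :=
  (1 + (t * k) ^ 2)⁻¹ * (t * k * (arctan (t * (k + ε)) - arctan (t * (k - ε)) - π)
    + (log (1 + (t * (k + ε)) ^ 2) - log (1 + (t * (k - ε)) ^ 2)) / 2)

lemma setIntegral_arctanKernel {k t ε : ℝ} (ht : 0 < t) (hε : 0 < ε)
    (hint : IntegrableOn (arctanKernel k t) {x | ε < |x - k|}) :
    ∫ x in {x | ε < |x - k|}, arctanKernel k t x = truncIntegralArctanKernel k t ε := by
  simp only [setIntegral_abs_sub_gt hε.le hint, arctanKernel_neg, integral_neg]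
  rw [integral_Ioi_arctanKernel ht (by linarith), integral_Ioi_arctanKernel ht (by linarith)]
  simp only [arctanKernelPrimitive, truncIntegralArctanKernel]
  have hneg : t * (ε - k) = -(t * (k - ε)) := by ring
  rw [hneg, arctan_neg, neg_sq, add_sub_cancel_left, sub_neg_eq_add, sub_add_cancel, mul_neg,
    neg_sq]
  ring

lemma integral_inv_one_add_mul_sq {x : ℝ} (hx : x ≠ 0) :
    ∫ t in (0 : ℝ)..1, (1 + (t * x) ^ 2)⁻¹ = arctan x / x := by
  rw [intervalIntegral.integral_comp_mul_right (fun y => (1 + y ^ 2)⁻¹) hx, integral_inv_one_add_sq]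
  simp [div_eq_inv_mul]

lemma integral_arctanKernel_param (k : ℝ) {x : ℝ} (hx : x ≠ 0) :
    ∫ t in (0 : ℝ)..1, arctanKernel k t x = arctan x / x / (x - k) := by
  simp only [arctanKernel, intervalIntegral.integral_div, integral_inv_one_add_mul_sq hx]

lemma arctan_le_self {x : ℝ} (hx : 0 ≤ x) : arctan x ≤ x :=
  (le_tan (arctan_nonneg.2 hx) (arctan_lt_pi_div_two x)).trans_eq (tan_arctan x)

lemma arctan_div_self_nonneg (x : ℝ) : 0 ≤ arctan x / x := by
  rcases le_total 0 x with hx | hx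
  · exact div_nonneg (arctan_nonneg.2 hx) hx
  · exact div_nonneg_of_nonpos (arctan_le_zero.2 hx) hx

lemma arctan_div_self_mul_one_add_abs_le (x : ℝ) : arctan x / x * (1 + |x|) ≤ 1 + π / 2 := by
  have habs : arctan x / x = arctan |x| / |x| := by
    rcases le_total 0 x with hx | hx
    · rw [abs_of_nonneg hx]
    · rw [abs_of_nonpos hx, arctan_neg, neg_div_neg_eq]
  rw [habs]
  rcases (abs_nonneg x).eq_or_lt with hx | hx
  · simp only [← hx, div_zero, zero_mul]; positivity
  have h₁ : arctan |x| / |x| ≤ 1 := div_le_one_of_le₀ (arctan_le_self hx.le) hx.le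
  have h₂ : arctan |x| / |x| * |x| = arctan |x| := div_mul_cancel₀ _ hx.ne'
  linarith [arctan_lt_pi_div_two |x|]

lemma arctan_div_self_div_abs_sub_le {k ε x : ℝ} (hε : 0 < ε) (hx : ε < |x - k|) :
    arctan x / x / |x - k| ≤ (1 + π / 2) * ((1 + |k|) / ε + 1) * (1 + x ^ 2)⁻¹ := by
  have hd : 0 < |x - k| := hε.trans hx
  have hs : 1 + |x| ≤ ((1 + |k|) / ε + 1) * |x - k| := by
    have : (1 + |k|) ≤ (1 + |k|) / ε * |x - k| := by
      rw [div_mul_eq_mul_div, le_div_iff₀ hε]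
      exact mul_le_mul_of_nonneg_left hx.le (by positivity)
    linarith [abs_sub_abs_le_abs_sub x k]
  have ha := arctan_div_self_mul_one_add_abs_le x
  have ha₀ := arctan_div_self_nonneg x
  have hsq : 1 + x ^ 2 ≤ (1 + |x|) ^ 2 := by nlinarith [sq_abs x, abs_nonneg x]
  rw [← div_eq_mul_inv, div_le_div_iff₀ hd (by positivity)]
  calc arctan x / x * (1 + x ^ 2) ≤ arctan x / x * (1 + |x|) * (1 + |x|) := by
        rw [mul_assoc, ← sq]; exact mul_le_mul_of_nonneg_left hsq ha₀
    _ ≤ (1 + π / 2) * (((1 + |k|) / ε + 1) * |x - k|) :=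
        mul_le_mul ha hs (by positivity) (by positivity)
    _ = _ := by ring

lemma integrableOn_arctan_div_self_div_abs_sub (k : ℝ) {ε : ℝ} (hε : 0 < ε) :
    IntegrableOn (fun x => arctan x / x / |x - k|) {x | ε < |x - k|} := by
  refine Integrable.mono' (integrable_inv_one_add_sq.const_mul
    ((1 + π / 2) * ((1 + |k|) / ε + 1))).integrableOn
    (by fun_prop : Measurable _).aestronglyMeasurable ?_
  refine (ae_restrict_iff' (measurableSet_lt measurable_const (by fun_prop))).2
    (ae_of_all _ fun x hx => ?_)
  rw [norm_of_nonneg (div_nonneg (arctan_div_self_nonneg x) (abs_nonneg _))]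
  exact arctan_div_self_div_abs_sub_le hε hx

lemma norm_arctanKernel (k t x : ℝ) : ‖arctanKernel k t x‖ = (1 + (t * x) ^ 2)⁻¹ / |x - k| := by
  rw [arctanKernel, norm_div, Real.norm_eq_abs, Real.norm_eq_abs, abs_of_pos (by positivity)]

lemma setIntegral_arctan_div_self_div_sub {k ε : ℝ} (hε : 0 < ε) :
    ∫ x in {x | ε < |x - k|}, arctan x / x / (x - k)
      = ∫ t in (0 : ℝ)..1, truncIntegralArctanKernel k t ε := by
  set S := {x : ℝ | ε < |x - k|}
  have hS : MeasurableSet S := measurableSet_lt measurable_const (by fun_prop)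
  have hnorm : ∀ x, x ≠ 0 →
      ∫ t in Ioc (0 : ℝ) 1, ‖arctanKernel k t x‖ = arctan x / x / |x - k| := by
    intro x hx
    simp only [norm_arctanKernel]
    rw [← intervalIntegral.integral_of_le zero_le_one, intervalIntegral.integral_div,
      integral_inv_one_add_mul_sq hx]
  have hint : Integrable (Function.uncurry fun x t => arctanKernel k t x)
      ((volume.restrict S).prod (volume.restrict (Ioc 0 1))) := by
    refine (integrable_prod_iff
      (by unfold arctanKernel; fun_prop : Measurable _).aestronglyMeasurable).2 ⟨?_, ?_⟩
    · refine ae_of_all _ fun x => Continuous.integrableOn_Ioc ?_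
      change Continuous fun t => (1 + (t * x) ^ 2)⁻¹ / (x - k)
      fun_prop (disch := intro; positivity)
    · refine (integrableOn_arctan_div_self_div_abs_sub k hε).congr ?_
      filter_upwards [ae_restrict_of_ae (volume.ae_ne 0)] with x hx
      exact (hnorm x hx).symm
  have hsection : ∀ᵐ t, t ∈ Ioc (0 : ℝ) 1 → IntegrableOn (arctanKernel k t) S :=
    (ae_restrict_iff' measurableSet_Ioc).1 hint.prod_left_ae
  calc ∫ x in S, arctan x / x / (x - k)
      = ∫ x in S, ∫ t in Ioc (0 : ℝ) 1, arctanKernel k t x := by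
        refine setIntegral_congr_ae hS ?_
        filter_upwards [volume.ae_ne 0] with x hx _
        rw [← intervalIntegral.integral_of_le zero_le_one, integral_arctanKernel_param k hx]
    _ = ∫ t in Ioc (0 : ℝ) 1, ∫ x in S, arctanKernel k t x := integral_integral_swap hint
    _ = ∫ t in (0 : ℝ)..1, truncIntegralArctanKernel k t ε := by
        rw [intervalIntegral.integral_of_le zero_le_one]
        refine setIntegral_congr_ae measurableSet_Ioc ?_
        filter_upwards [hsection] with t ht ht'
        exact setIntegral_arctanKernel ht'.1 hε (ht ht')

lemma continuous_truncIntegralArctanKernel (k : ℝ) :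
    Continuous (Function.uncurry fun ε t => truncIntegralArctanKernel k t ε) := by
  unfold truncIntegralArctanKernel
  fun_prop (disch := intro; positivity)

lemma integral_truncIntegralArctanKernel_zero (k : ℝ) :
    ∫ t in (0 : ℝ)..1, truncIntegralArctanKernel k t 0 = -(π / 2) * (log (k ^ 2 + 1) / k) := by
  rcases eq_or_ne k 0 with rfl | hk
  · simp [truncIntegralArctanKernel]
  have hderiv : ∀ t ∈ uIcc (0 : ℝ) 1, HasDerivAt (fun t => -(π / 2) * (log (1 + (t * k) ^ 2) / k))
      (truncIntegralArctanKernel k t 0) t := by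
    intro t _
    have hsq : HasDerivAt (fun t => 1 + (t * k) ^ 2) (2 * (t * k) * k) t := by
      simpa using (((hasDerivAt_id t).mul_const k).pow 2).const_add 1
    refine ((hsq.log (by positivity)).div_const k).const_mul _ |>.congr_deriv ?_
    have : 1 + (t * k) ^ 2 ≠ 0 := by positivity
    simp only [truncIntegralArctanKernel, add_zero, sub_zero]
    field_simp
    ring
  rw [intervalIntegral.integral_eq_sub_of_hasDerivAt hderiv
    (((continuous_truncIntegralArctanKernel k).uncurry_left 0).intervalIntegrable 0 1)]
  simp [add_comm]

/-- For every real `k`, the Cauchy principal value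
`(2/π) P∫_{−∞}^{∞} (arctan k')/k' / (k' − k) dk'` equals `−ln(k²+1)/k`
(interpreted as `0` at `k = 0`). -/
theorem hilbert_transform_arctan (k : ℝ) :
    Tendsto
      (fun ε : ℝ => (2 / Real.pi) *
        ∫ k' in {x : ℝ | ε < |x - k|}, (Real.arctan k' / k') / (k' - k))
      (nhdsWithin 0 (Set.Ioi 0))
      (nhds (if k = 0 then 0 else -Real.log (k ^ 2 + 1) / k)) := by
  have hlim : Tendsto (fun ε => ∫ t in (0 : ℝ)..1, truncIntegralArctanKernel k t ε) (𝓝[>] 0)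
      (𝓝 (∫ t in (0 : ℝ)..1, truncIntegralArctanKernel k t 0)) :=
    ((intervalIntegral.continuous_parametric_intervalIntegral_of_continuous'
      (continuous_truncIntegralArctanKernel k) 0 1).tendsto 0).mono_left nhdsWithin_le_nhds
  have hvalue : (if k = 0 then 0 else -log (k ^ 2 + 1) / k)
      = 2 / π * ∫ t in (0 : ℝ)..1, truncIntegralArctanKernel k t 0 := by
    rw [integral_truncIntegralArctanKernel_zero, ite_eq_right_iff.2 fun hk => by simp [hk]]
    field_simp
  rw [hvalue]
  refine (hlim.const_mul _).congr' ?_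
  filter_upwards [self_mem_nhdsWithin] with ε hε
  rw [setIntegral_arctan_div_self_div_sub hε]
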